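/- arXiv:1808.01404 — 3 statements merged into one kernel-verified Lean document; each statement's English description precedes it below -/
import Mathlib

section
/- Let p, q ≥ 0, and let c, α, β, γ be complex numbers with Re(c) > Re(γ) > 0, Re(α) > 0 and Re(β) > 0. Then the extended (p,q)-Mittag-Leffler function has the integral representation E^{γ,c}_{α,β}(z; p, q) = (1/B(γ, c−γ)) ∫₀¹ t^{γ−1} (1−t)^{c−γ−1} exp(−p/t − q/(1−t)) E^c_{α,β}(t z) dt for every complex z. -/
open MeasureTheory Complex

/-- The extended beta function `B(x, y; p, q) = ∫₀¹ t^(x-1) (1-t)^(y-1) exp(-p/t - q/(1-t)) dt`. -/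
noncomputable def extBeta (p q x y : ℂ) : ℂ :=
  ∫ t in (0:ℝ)..1, (t : ℂ) ^ (x - 1) * (1 - (t : ℂ)) ^ (y - 1) *
    Complex.exp (-(p / t) - q / (1 - (t : ℂ)))

/-- The classical beta function `B(x, y) = Γ(x)Γ(y)/Γ(x+y)`. -/
noncomputable def cBeta (x y : ℂ) : ℂ :=
  Complex.Gamma x * Complex.Gamma y / Complex.Gamma (x + y)

/-- The Pochhammer symbol `(c)ₙ = c (c+1) ⋯ (c+n-1)`. -/
noncomputable def poch (c : ℂ) (n : ℕ) : ℂ :=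
  ∏ i ∈ Finset.range n, (c + i)

/-- The Prabhakar Mittag-Leffler function `E^c_{α,β}(z) = Σ (c)ₙ zⁿ / (Γ(αn+β) n!)`. -/
noncomputable def prabhakarML (α β c z : ℂ) : ℂ :=
  ∑' n : ℕ, poch c n * z ^ n / (Complex.Gamma (α * n + β) * n.factorial)

/-- The extended (p,q)-Mittag-Leffler function
`E^{γ,c}_{α,β}(z; p, q) = Σ [B(γ+n, c-γ; p, q)/B(γ, c-γ)] (c)ₙ zⁿ / (Γ(αn+β) n!)`. -/
noncomputable def extML (α β γ c p q z : ℂ) : ℂ :=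
  ∑' n : ℕ, extBeta p q (γ + n) (c - γ) / cBeta γ (c - γ) * poch c n * z ^ n /
    (Complex.Gamma (α * n + β) * n.factorial)

/-! Expanding `E^c_{α,β}(tz)` as a power series in `t`, the `n`-th term integrated against the
kernel `t^(γ-1) (1-t)^(c-γ-1) exp(-p/t - q/(1-t))` is `B(γ+n, c-γ; p, q)` times the `n`-th
coefficient, so the identity is termwise integration. Dominated convergence justifies it: for
`p, q ≥ 0` the kernel is dominated by the classical beta integrand, and on `[0, 1]` the series is
dominated by `∑ ‖(c)ₙ zⁿ / (Γ(αn+β) n!)‖`. That series converges by the ratio test, because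
`Γ(s) / Γ(s+α) = B(s, α) / Γ(α)` and the beta integral `B(s, α)` tends to `0` as `Re s → ∞`. -/

open Filter Topology Interval

namespace Complex

lemma tendsto_betaIntegral_comap_re_atTop {u : ℂ} (hu : 0 < u.re) :
    Tendsto (fun s => betaIntegral s u) (comap re atTop) (𝓝 0) := by
  have hdom : IntervalIntegrable (fun t : ℝ => ‖(1 - (t : ℂ)) ^ (u - 1)‖) volume 0 1 := by
    simpa using (betaIntegral_convergent (u := 1) (by simp) hu).norm
  have hre : ∀ᶠ s in comap re atTop, 1 ≤ s.re := tendsto_comap.eventually (eventually_ge_atTop 1)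
  have hlim : ∀ᵐ t : ℝ, t ∈ Ι (0 : ℝ) 1 →
      Tendsto (fun s : ℂ => (t : ℂ) ^ (s - 1) * (1 - (t : ℂ)) ^ (u - 1))
        (comap re atTop) (𝓝 0) := by
    filter_upwards [Measure.ae_ne volume 1] with t ht1 ht
    rw [Set.uIoc_of_le zero_le_one] at ht
    rw [← zero_mul ((1 - (t : ℂ)) ^ (u - 1))]
    refine Tendsto.mul_const _ (tendsto_zero_iff_norm_tendsto_zero.2 ?_)
    simp only [norm_cpow_eq_rpow_re_of_pos ht.1, sub_re, one_re]
    exact (tendsto_rpow_atTop_of_base_lt_one t (by linarith [ht.1]) (lt_of_le_of_ne ht.2 ht1)).comp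
      ((tendsto_atTop_add_const_right _ (-1) tendsto_comap).congr fun s => by ring)
  have := intervalIntegral.tendsto_integral_filter_of_dominated_convergence _ ?_ ?_ hdom hlim
  · simpa [betaIntegral] using this
  · filter_upwards with s
    fun_prop
  · filter_upwards [hre] with s hs
    filter_upwards with t ht
    rw [Set.uIoc_of_le zero_le_one] at ht
    rw [norm_mul, norm_cpow_eq_rpow_re_of_pos ht.1]
    refine mul_le_of_le_one_left (norm_nonneg _) (Real.rpow_le_one ht.1.le ht.2 ?_)
    simp [hs]

lemma Gamma_div_Gamma_add {s u : ℂ} (hs : 0 < s.re) (hu : 0 < u.re) :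
    Gamma s / Gamma (s + u) = betaIntegral s u / Gamma u := by
  have hsu : Gamma (s + u) ≠ 0 := Gamma_ne_zero_of_re_pos (by rw [add_re]; linarith)
  rw [div_eq_div_iff hsu (Gamma_ne_zero_of_re_pos hu), Gamma_mul_Gamma_eq_betaIntegral hs hu]
  ring

lemma tendsto_Gamma_div_Gamma_add_comap_re_atTop {u : ℂ} (hu : 0 < u.re) :
    Tendsto (fun s => Gamma s / Gamma (s + u)) (comap re atTop) (𝓝 0) := by
  have hpos : ∀ᶠ s in comap re atTop, 0 < s.re := tendsto_comap.eventually (eventually_gt_atTop 0)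
  simpa using ((tendsto_betaIntegral_comap_re_atTop hu).div_const (Gamma u)).congr'
    (hpos.mono fun s hs => (Gamma_div_Gamma_add hs hu).symm)

end Complex

lemma poch_succ (c : ℂ) (n : ℕ) : poch c (n + 1) = poch c n * (c + n) :=
  Finset.prod_range_succ _ _

lemma summable_norm_prabhakar_term {α : ℂ} (hα : 0 < α.re) (β c z : ℂ) :
    Summable fun n : ℕ => ‖poch c n * z ^ n / (Gamma (α * n + β) * n.factorial)‖ := by
  set s : ℕ → ℂ := fun n => α * n + β
  set ρ : ℕ → ℂ := fun n => (c + n) / (1 + n) * z * (Gamma (s n) / Gamma (s n + α))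
  have hs : Tendsto s atTop (comap re atTop) := by
    have hre : Tendsto (fun n : ℕ => α.re * n + β.re) atTop atTop :=
      tendsto_atTop_add_const_right _ _ (tendsto_natCast_atTop_atTop.const_mul_atTop hα)
    exact tendsto_comap_iff.2 (hre.congr fun n => by simp [s])
  have hρ : Tendsto ρ atTop (𝓝 0) := by
    have := ((tendsto_add_mul_div_add_mul_atTop_nhds c 1 1 one_ne_zero).mul_const z).mul
      ((Complex.tendsto_Gamma_div_Gamma_add_comap_re_atTop hα).comp hs)
    simp only [one_mul, mul_zero] at this
    exact this
  have hpos : ∀ᶠ n in atTop, 0 < (s n).re :=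
    hs.eventually (tendsto_comap.eventually (eventually_gt_atTop 0))
  refine summable_of_ratio_norm_eventually_le (r := 1 / 2) (by norm_num) ?_
  filter_upwards [hpos, hρ.norm.eventually (gt_mem_nhds (by norm_num : ‖(0 : ℂ)‖ < 1 / 2))]
    with n hn hρn
  have hstep : poch c (n + 1) * z ^ (n + 1) / (Gamma (α * ↑(n + 1) + β) * (n + 1).factorial) =
      poch c n * z ^ n / (Gamma (s n) * n.factorial) * ρ n := by
    have h1 : α * ((n + 1 : ℕ) : ℂ) + β = s n + α := by push_cast; ring
    have hG : Gamma (s n) ≠ 0 := Gamma_ne_zero_of_re_pos hn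
    have hG' : Gamma (s n + α) ≠ 0 := Gamma_ne_zero_of_re_pos (by rw [add_re]; linarith)
    have hn1 : (1 + n : ℂ) ≠ 0 := by norm_cast; omega
    rw [h1, poch_succ, Nat.factorial_succ]
    push_cast
    simp only [ρ]
    field_simp
    ring
  rw [norm_norm, norm_norm, hstep, norm_mul, mul_comm (1 / 2 : ℝ)]
  exact mul_le_mul_of_nonneg_left hρn.le (norm_nonneg _)

lemma hasSum_intervalIntegral_mul_tsum {μ : Measure ℝ} {a b : ℝ} {w : ℝ → ℂ} {f : ℕ → ℝ → ℂ}
    {M : ℕ → ℝ} (hw : IntervalIntegrable w μ a b)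
    (hf : ∀ n, AEStronglyMeasurable (f n) (μ.restrict (Ι a b)))
    (hfM : ∀ n, ∀ t ∈ Ι a b, ‖f n t‖ ≤ M n) (hM : Summable M) :
    HasSum (fun n => ∫ t in a..b, w t * f n t ∂μ) (∫ t in a..b, w t * ∑' n, f n t ∂μ) := by
  refine intervalIntegral.hasSum_integral_of_dominated_convergence (fun n t => M n * ‖w t‖)
    (fun n => hw.def'.aestronglyMeasurable.mul (hf n))
    (fun n => Eventually.of_forall fun t ht => ?_)
    (Eventually.of_forall fun t _ => hM.mul_right _) ?_
    (Eventually.of_forall fun t ht =>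
      ((hM.of_norm_bounded (fun n => hfM n t ht)).hasSum).mul_left (w t))
  · rw [norm_mul, mul_comm]
    exact mul_le_mul_of_nonneg_right (hfM n t ht) (norm_nonneg _)
  · simp_rw [tsum_mul_right]
    exact hw.norm.const_mul _

noncomputable def extBetaKernel (p q x y : ℂ) (t : ℝ) : ℂ :=
  (t : ℂ) ^ (x - 1) * (1 - (t : ℂ)) ^ (y - 1) * Complex.exp (-(p / t) - q / (1 - (t : ℂ)))

lemma norm_exp_neg_div_sub_div_le_one {p q t : ℝ} (hp : 0 ≤ p) (hq : 0 ≤ q)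
    (ht : t ∈ Set.Icc (0 : ℝ) 1) :
    ‖Complex.exp (-((p : ℂ) / t) - (q : ℂ) / (1 - (t : ℂ)))‖ ≤ 1 := by
  have h : -((p : ℂ) / t) - (q : ℂ) / (1 - (t : ℂ)) = ((-(p / t) - q / (1 - t) : ℝ) : ℂ) := by
    push_cast; ring
  rw [h, Complex.norm_exp_ofReal, Real.exp_le_one_iff]
  have := div_nonneg hp ht.1
  have := div_nonneg hq (sub_nonneg.2 ht.2)
  linarith

lemma intervalIntegrable_extBetaKernel {p q : ℝ} (hp : 0 ≤ p) (hq : 0 ≤ q) {x y : ℂ}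
    (hx : 0 < x.re) (hy : 0 < y.re) :
    IntervalIntegrable (extBetaKernel p q x y) volume 0 1 := by
  refine (Complex.betaIntegral_convergent hx hy).mono_fun (by unfold extBetaKernel; fun_prop) ?_
  rw [Set.uIoc_of_le zero_le_one]
  refine (ae_restrict_iff' measurableSet_Ioc).2 (Eventually.of_forall fun t ht => ?_)
  dsimp only
  rw [extBetaKernel, norm_mul _ (Complex.exp _)]
  exact mul_le_of_le_one_right (norm_nonneg _)
    (norm_exp_neg_div_sub_div_le_one hp hq (Set.Ioc_subset_Icc_self ht))

lemma integral_extBetaKernel_mul_pow (p q x y : ℂ) (n : ℕ) :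
    ∫ t in (0 : ℝ)..1, extBetaKernel p q x y t * (t : ℂ) ^ n = extBeta p q (x + n) y := by
  rw [extBeta]
  refine intervalIntegral.integral_congr_ae ?_
  filter_upwards with t ht
  rw [Set.uIoc_of_le zero_le_one] at ht
  have ht0 : (t : ℂ) ≠ 0 := ofReal_ne_zero.2 ht.1.ne'
  rw [extBetaKernel, ← cpow_natCast, show x + n - 1 = x - 1 + n by ring, cpow_add _ _ ht0]
  ring

theorem extML_integral_repr_general (p q : ℝ) (hp : 0 ≤ p) (hq : 0 ≤ q)
    (c α β γ : ℂ) (hcγ : γ.re < c.re) (hγ : 0 < γ.re)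
    (hα : 0 < α.re) (z : ℂ) :
    extML α β γ c p q z =
      (1 / cBeta γ (c - γ)) *
        ∫ t in (0:ℝ)..1, (t : ℂ) ^ (γ - 1) * (1 - (t : ℂ)) ^ (c - γ - 1) *
          Complex.exp (-((p : ℂ) / t) - (q : ℂ) / (1 - (t : ℂ))) *
          prabhakarML α β c (t * z) := by
  set a : ℕ → ℂ := fun n => poch c n * z ^ n / (Gamma (α * n + β) * n.factorial)
  have hterm (n : ℕ) (t : ℝ) :
      poch c n * (t * z) ^ n / (Gamma (α * n + β) * n.factorial) = (t : ℂ) ^ n * a n := by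
    simp only [a]; ring
  have hsum : HasSum
      (fun n => ∫ t in (0 : ℝ)..1, extBetaKernel p q γ (c - γ) t * ((t : ℂ) ^ n * a n))
      (∫ t in (0 : ℝ)..1, extBetaKernel p q γ (c - γ) t * prabhakarML α β c (t * z)) := by
    simp only [prabhakarML, hterm]
    refine hasSum_intervalIntegral_mul_tsum
      (intervalIntegrable_extBetaKernel hp hq hγ (by rw [sub_re]; linarith)) (fun n => by fun_prop)
      (fun n t ht => ?_) (summable_norm_prabhakar_term hα β c z)
    rw [Set.uIoc_of_le zero_le_one] at ht
    rw [norm_mul, norm_pow, norm_real, Real.norm_of_nonneg ht.1.le]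
    exact mul_le_of_le_one_left (norm_nonneg _) (pow_le_one₀ ht.1.le ht.2)
  have hcoef (n : ℕ) : ∫ t in (0 : ℝ)..1, extBetaKernel p q γ (c - γ) t * ((t : ℂ) ^ n * a n) =
      extBeta p q (γ + n) (c - γ) * a n := by
    simp_rw [← mul_assoc]
    rw [intervalIntegral.integral_mul_const, integral_extBetaKernel_mul_pow]
  show _ = 1 / cBeta γ (c - γ) *
    ∫ t in (0 : ℝ)..1, extBetaKernel p q γ (c - γ) t * prabhakarML α β c (t * z)
  rw [extML, ← (hsum.mul_left _).tsum_eq]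
  exact tsum_congr fun n => by rw [hcoef]; simp only [a]; ring

/-- integral representation of the extended (p,q)-Mittag-Leffler function. -/
theorem extML_integral_repr (p q : ℝ) (hp : 0 ≤ p) (hq : 0 ≤ q)
    (c α β γ : ℂ) (hcγ : γ.re < c.re) (hγ : 0 < γ.re)
    (hα : 0 < α.re) (hβ : 0 < β.re) (z : ℂ) :
    extML α β γ c p q z =
      (1 / cBeta γ (c - γ)) *
        ∫ t in (0:ℝ)..1, (t : ℂ) ^ (γ - 1) * (1 - (t : ℂ)) ^ (c - γ - 1) *
          Complex.exp (-((p : ℂ) / t) - (q : ℂ) / (1 - (t : ℂ))) *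
          prabhakarML α β c (t * z) :=
  extML_integral_repr_general p q hp hq c α β γ hcγ hγ hα z
end

section
/- Let p, q ≥ 0, and let c, α, β, γ be complex numbers with Re(c) > Re(γ) > 0, Re(α) > 0 and Re(β) > 0. Then for every complex z the functional-differential recurrence E^{γ,c}_{α,β}(z; p, q) = β · E^{γ,c}_{α,β+1}(z; p, q) + α z · (d/dz) E^{γ,c}_{α,β+1}(z; p, q) holds, where d/dz denotes the complex derivative. -/
open MeasureTheory Complex

/-!
Termwise the recurrence is the functional equation `1/Γ(s) = s/Γ(s+1)` at `s = αn + β`, because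
`(β + α z d/dz) zⁿ = (αn + β) zⁿ`. What remains is to justify termwise differentiation, i.e. to
show that the coefficients decay faster than any geometric sequence. For `p, q ≥ 0` the extended
beta factors are bounded by the classical beta integral uniformly in `n`, `|(c)ₙ| ≤ (|c|+1)ⁿ n!`,
and `1/|Γ(αn+β)|` is superexponentially small: the reflection formula bounds `1/Γ` by
`C e^{π|Im z|}` on the strip `1 ≤ Re z ≤ 2`, the functional equation carries this to
`Γ(Re w) ≤ C e^{π|Im w|} |Γ(w)|` on `Re w ≥ 1`, and `Γ(x) ≥ T^{x-1} e^{-T}` for every `T > 0`.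
-/

open Filter Set
open scoped Real

lemma Complex.norm_Gamma_le_Gamma_re {s : ℂ} (hs : 0 < s.re) : ‖Gamma s‖ ≤ Real.Gamma s.re := by
  rw [Gamma_eq_integral hs, GammaIntegral, Real.Gamma_eq_integral hs]
  refine (norm_integral_le_integral_norm _).trans_eq (setIntegral_congr_fun measurableSet_Ioi ?_)
  intro x (hx : 0 < x)
  dsimp only
  rw [norm_mul, norm_real, Real.norm_of_nonneg (Real.exp_pos _).le,
    norm_cpow_eq_rpow_re_of_pos hx, sub_re, one_re]

lemma Real.Gamma_le_one_of_mem_Icc {x : ℝ} (hx : x ∈ Icc 1 2) : Gamma x ≤ 1 := by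
  simpa [Gamma_one, Gamma_two] using
    convexOn_Gamma.le_max_of_mem_Icc (by norm_num : (1 : ℝ) ∈ Ioi 0) (by norm_num) hx

lemma Real.rpow_mul_exp_neg_le_Gamma {x T : ℝ} (hx : 1 ≤ x) (hT : 0 < T) :
    T ^ (x - 1) * exp (-T) ≤ Gamma x := by
  have hint : IntegrableOn (fun t => exp (-t) * t ^ (x - 1)) (Ioi 0) :=
    GammaIntegral_convergent (by linarith)
  calc T ^ (x - 1) * exp (-T) = ∫ t in Ioi T, exp (-t) * T ^ (x - 1) := by
        rw [integral_mul_const, integral_exp_neg_Ioi, mul_comm]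
    _ ≤ ∫ t in Ioi T, exp (-t) * t ^ (x - 1) := by
        refine setIntegral_mono_on ((integrableOn_exp_neg_Ioi T).mul_const _)
          (hint.mono_set (Ioi_subset_Ioi hT.le)) measurableSet_Ioi fun t (ht : T < t) => ?_
        gcongr
    _ ≤ ∫ t in Ioi 0, exp (-t) * t ^ (x - 1) :=
        setIntegral_mono_set hint
          ((ae_restrict_iff' measurableSet_Ioi).2 (ae_of_all _ fun t (ht : 0 < t) => by positivity))
          (Ioi_subset_Ioi hT.le).eventuallyLE
    _ = Gamma x := (Gamma_eq_integral (by linarith)).symm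

lemma Complex.norm_sin_le_exp_abs_im (z : ℂ) : ‖sin z‖ ≤ Real.exp |z.im| := by
  have hexp (w : ℂ) (hw : w.re ≤ |z.im|) : ‖exp w‖ ≤ Real.exp |z.im| := by
    rw [norm_exp]; exact Real.exp_le_exp.2 hw
  calc ‖sin z‖ = ‖exp (-z * I) - exp (z * I)‖ / 2 := by
        rw [sin, norm_div, norm_mul, norm_I, mul_one, RCLike.norm_ofNat]
    _ ≤ (Real.exp |z.im| + Real.exp |z.im|) / 2 := by
        gcongr
        refine (norm_sub_le _ _).trans (add_le_add (hexp _ ?_) (hexp _ ?_)) <;>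
          simp [le_abs_self, neg_le_abs]
    _ = Real.exp |z.im| := by ring

lemma Complex.norm_inv_Gamma_le_exp_of_one_le_abs_im {z : ℂ} (hre : z.re ∈ Icc 1 2)
    (him : 1 ≤ |z.im|) : ‖(Gamma z)⁻¹‖ ≤ Real.exp (π * |z.im|) := by
  have him0 : z.im ≠ 0 := abs_pos.1 (one_pos.trans_le him)
  have hsin : sin (π * z) ≠ 0 := by
    rw [Ne, sin_eq_zero_iff]
    rintro ⟨k, hk⟩
    apply him0
    simpa [Real.pi_ne_zero] using congrArg im hk
  have h1 : 1 - z ≠ 0 := fun h => him0 (by simpa using congrArg im h)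
  have h2 : 2 - z ≠ 0 := fun h => him0 (by simpa using congrArg im h)
  have hshift : Gamma (3 - z) = (2 - z) * ((1 - z) * Gamma (1 - z)) := by
    have e : Gamma (2 - z) = (1 - z) * Gamma (1 - z) := by rw [← Gamma_add_one _ h1]; ring_nf
    rw [← e, ← Gamma_add_one _ h2]
    ring_nf
  have hrefl := (eq_div_iff hsin).1 (Gamma_mul_Gamma_one_sub z)
  have hΓ := Gamma_ne_zero_of_re_pos (one_pos.trans_le hre.1)
  -- reflection formula, with `Γ(1 - z)` shifted into the half-plane `re > 0`
  have key : (Gamma z)⁻¹ * (π * ((1 - z) * (2 - z))) = Gamma (3 - z) * sin (π * z) := by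
    rw [hshift]
    field_simp
    exact hrefl.symm
  have hΓ3 : ‖Gamma (3 - z)‖ ≤ 1 :=
    (norm_Gamma_le_Gamma_re (by simp; linarith [hre.2])).trans
      (Real.Gamma_le_one_of_mem_Icc (by simp; constructor <;> linarith [hre.1, hre.2]))
  have hsin_le : ‖sin (π * z)‖ ≤ Real.exp (π * |z.im|) := by
    simpa [abs_mul, abs_of_pos Real.pi_pos] using norm_sin_le_exp_abs_im (π * z)
  have hden : 1 ≤ π * (‖1 - z‖ * ‖2 - z‖) := by
    have h1z : 1 ≤ ‖1 - z‖ := him.trans (by simpa using abs_im_le_norm (1 - z))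
    have h2z : 1 ≤ ‖2 - z‖ := him.trans (by simpa using abs_im_le_norm (2 - z))
    nlinarith [one_le_mul_of_one_le_of_one_le h1z h2z, Real.pi_gt_three]
  calc ‖(Gamma z)⁻¹‖ ≤ ‖(Gamma z)⁻¹‖ * (π * (‖1 - z‖ * ‖2 - z‖)) :=
        le_mul_of_one_le_right (norm_nonneg _) hden
    _ = ‖Gamma (3 - z)‖ * ‖sin (π * z)‖ := by
        rw [← norm_mul (Gamma _), ← key]; simp [abs_of_pos Real.pi_pos]
    _ ≤ 1 * Real.exp (π * |z.im|) := by gcongr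
    _ = Real.exp (π * |z.im|) := one_mul _

lemma Complex.exists_norm_inv_Gamma_le_of_re_mem_Icc :
    ∃ C, 0 ≤ C ∧ ∀ z : ℂ, z.re ∈ Icc 1 2 → ‖(Gamma z)⁻¹‖ ≤ C * Real.exp (π * |z.im|) := by
  obtain ⟨C₀, hC₀⟩ := (isCompact_closedBall (0 : ℂ) 3).exists_bound_of_continuousOn
    differentiable_one_div_Gamma.continuous.continuousOn
  refine ⟨max C₀ 1, le_max_of_le_right zero_le_one, fun z hz => ?_⟩
  have hexp : 1 ≤ Real.exp (π * |z.im|) := Real.one_le_exp (by positivity)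
  rcases le_or_gt 1 |z.im| with him | him
  · exact (norm_inv_Gamma_le_exp_of_one_le_abs_im hz him).trans
      (le_mul_of_one_le_left (Real.exp_pos _).le (le_max_right _ _))
  · have hz3 : z ∈ Metric.closedBall 0 3 := by
      rw [mem_closedBall_zero_iff]
      linarith [norm_le_abs_re_add_abs_im z, abs_of_pos (one_pos.trans_le hz.1), hz.2]
    calc ‖(Gamma z)⁻¹‖ ≤ max C₀ 1 := (hC₀ z hz3).trans (le_max_left _ _)
      _ ≤ max C₀ 1 * Real.exp (π * |z.im|) :=
        le_mul_of_one_le_right (le_max_of_le_right zero_le_one) hexp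

lemma Complex.exists_Gamma_re_le_mul_norm_Gamma :
    ∃ C, 0 ≤ C ∧ ∀ w : ℂ, 1 ≤ w.re → Real.Gamma w.re ≤ C * Real.exp (π * |w.im|) * ‖Gamma w‖ := by
  obtain ⟨C, hC0, hC⟩ := exists_norm_inv_Gamma_le_of_re_mem_Icc
  refine ⟨C, hC0, ?_⟩
  suffices ∀ n : ℕ, ∀ w : ℂ, w.re ∈ Icc 1 ((n : ℝ) + 2) →
      Real.Gamma w.re ≤ C * Real.exp (π * |w.im|) * ‖Gamma w‖ from
    fun w hw => this ⌈w.re⌉₊ w ⟨hw, by linarith [Nat.le_ceil w.re]⟩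
  intro n
  induction n with
  | zero =>
    intro w hw
    rw [Nat.cast_zero, zero_add] at hw
    have hΓ : ‖Gamma w‖ ≠ 0 := norm_ne_zero_iff.2 (Gamma_ne_zero_of_re_pos (by linarith [hw.1]))
    calc Real.Gamma w.re ≤ 1 := Real.Gamma_le_one_of_mem_Icc hw
      _ = ‖(Gamma w)⁻¹‖ * ‖Gamma w‖ := by rw [norm_inv, inv_mul_cancel₀ hΓ]
      _ ≤ C * Real.exp (π * |w.im|) * ‖Gamma w‖ := by gcongr; exact hC w hw
  | succ n ih =>
    intro w hw
    rcases le_or_gt w.re (n + 2) with h | h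
    · exact ih w ⟨hw.1, h⟩
    have hw1 : (w - 1).re ∈ Icc 1 ((n : ℝ) + 2) := by
      push_cast at hw h ⊢
      simp only [sub_re, one_re]
      constructor <;> linarith [hw.2]
    have hw0 : w - 1 ≠ 0 := ne_of_apply_ne re (by rw [zero_re]; linarith [hw1.1])
    calc Real.Gamma w.re = (w.re - 1) * Real.Gamma (w.re - 1) := by
          rw [← Real.Gamma_add_one (by linarith), sub_add_cancel]
      _ ≤ ‖w - 1‖ * (C * Real.exp (π * |(w - 1).im|) * ‖Gamma (w - 1)‖) := by
          gcongr
          · exact (Real.Gamma_pos_of_pos (by linarith)).le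
          · simpa using re_le_norm (w - 1)
          · simpa using ih (w - 1) hw1
      _ = C * Real.exp (π * |w.im|) * ‖Gamma w‖ := by
          rw [← sub_add_cancel w 1, Gamma_add_one _ hw0, norm_mul, sub_add_cancel]
          simp only [sub_im, one_im, sub_zero]
          ring

lemma Real.summable_pow_div_Gamma_mul_add {a : ℝ} (ha : 0 < a) (b R : ℝ) :
    Summable fun n : ℕ => R ^ n / Gamma (a * n + b) := by
  set T := (2 * |R| + 1) ^ a⁻¹
  have hT : 0 < T := by positivity
  have hTa : T ^ a = 2 * |R| + 1 := rpow_inv_rpow (by positivity) ha.ne'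
  refine .of_norm_bounded_eventually_nat (summable_geometric_two.mul_left (exp T / T ^ (b - 1))) ?_
  have hlarge : ∀ᶠ n : ℕ in atTop, 1 ≤ a * n + b :=
    (tendsto_atTop_add_const_right _ b
      (tendsto_natCast_atTop_atTop.const_mul_atTop ha)).eventually_ge_atTop 1
  filter_upwards [hlarge] with n hn
  have hΓ := rpow_mul_exp_neg_le_Gamma hn hT
  have hpos : 0 < T ^ (a * n + b - 1) * exp (-T) := by positivity
  have hsplit : T ^ (a * n + b - 1) = (2 * |R| + 1) ^ n * T ^ (b - 1) := by
    rw [add_sub_assoc, rpow_add hT, rpow_mul hT.le, hTa, rpow_natCast]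
  rw [norm_div, norm_pow, norm_eq_abs, norm_of_nonneg (hpos.le.trans hΓ)]
  calc |R| ^ n / Gamma (a * n + b) ≤ |R| ^ n / (T ^ (a * n + b - 1) * exp (-T)) :=
        div_le_div_of_nonneg_left (by positivity) hpos hΓ
    _ = exp T / T ^ (b - 1) * (|R| / (2 * |R| + 1)) ^ n := by
        rw [hsplit, exp_neg, div_pow]
        field_simp
    _ ≤ exp T / T ^ (b - 1) * (1 / 2) ^ n := by
        gcongr ?_ * ?_ ^ n
        rw [div_le_div_iff₀ (by positivity) two_pos]
        linarith

lemma Complex.summable_pow_mul_norm_inv_Gamma_mul_add {α : ℂ} (hα : 0 < α.re) (β : ℂ) (Q : ℝ) :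
    Summable fun n : ℕ => Q ^ n * ‖(Gamma (α * n + β))⁻¹‖ := by
  obtain ⟨C, hC0, hC⟩ := exists_Gamma_re_le_mul_norm_Gamma
  refine .of_norm_bounded_eventually_nat ((Real.summable_pow_div_Gamma_mul_add hα β.re
    (|Q| * Real.exp (π * |α.im|))).mul_left (C * Real.exp (π * |β.im|))) ?_
  have hlarge : ∀ᶠ n : ℕ in atTop, 1 ≤ α.re * n + β.re :=
    (tendsto_atTop_add_const_right _ β.re
      (tendsto_natCast_atTop_atTop.const_mul_atTop hα)).eventually_ge_atTop 1
  filter_upwards [hlarge] with n hn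
  set w := α * n + β
  have hwre : w.re = α.re * n + β.re := by simp [w]
  have hwim : |w.im| ≤ |α.im| * n + |β.im| := by
    simpa [w, abs_mul] using abs_add_le (α.im * n) β.im
  have hΓR : 0 < Real.Gamma w.re := Real.Gamma_pos_of_pos (by linarith)
  have hΓ : 0 < ‖Gamma w‖ := norm_pos_iff.2 (Gamma_ne_zero_of_re_pos (by linarith))
  have hinv : ‖Gamma w‖⁻¹ ≤ C * Real.exp (π * |w.im|) / Real.Gamma w.re := by
    rw [le_div_iff₀ hΓR, inv_mul_le_iff₀ hΓ]
    linarith [hC w (hwre ▸ hn)]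
  have hexp : Real.exp (π * |w.im|) ≤ Real.exp (π * |α.im|) ^ n * Real.exp (π * |β.im|) := by
    rw [← Real.exp_nat_mul, ← Real.exp_add]
    gcongr
    nlinarith [Real.pi_pos]
  rw [norm_mul, norm_pow, norm_norm, Real.norm_eq_abs, norm_inv]
  calc |Q| ^ n * ‖Gamma w‖⁻¹ ≤ |Q| ^ n * (C * Real.exp (π * |w.im|) / Real.Gamma w.re) := by
        gcongr
    _ ≤ |Q| ^ n * (C * (Real.exp (π * |α.im|) ^ n * Real.exp (π * |β.im|)) / Real.Gamma w.re) := by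
        gcongr
    _ = C * Real.exp (π * |β.im|) *
          ((|Q| * Real.exp (π * |α.im|)) ^ n / Real.Gamma (α.re * n + β.re)) := by
        rw [← hwre, mul_pow]
        ring

lemma hasSum_deriv_tsum_mul_pow {a : ℕ → ℂ} (ha : ∀ r : ℝ, 0 ≤ r → Summable fun n => ‖a n‖ * r ^ n)
    (z : ℂ) : HasSum (fun n => a n * (n * z ^ (n - 1))) (deriv (fun w => ∑' n, a n * w ^ n) z) := by
  have hbound (n : ℕ) (w : ℂ) (hw : w ∈ Metric.ball 0 (‖z‖ + 1)) :
      ‖a n * w ^ n‖ ≤ ‖a n‖ * (‖z‖ + 1) ^ n := by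
    rw [mem_ball_zero_iff] at hw
    rw [norm_mul, norm_pow]
    gcongr
  simpa using hasSum_deriv_of_summable_norm (F := fun n w => a n * w ^ n) (ha _ (by positivity))
    (fun n => ((differentiable_pow n).const_mul (a n)).differentiableOn) Metric.isOpen_ball
    hbound (mem_ball_zero_iff.2 (lt_add_one _))

lemma norm_extBeta_le {p q : ℝ} (hp : 0 ≤ p) (hq : 0 ≤ q) {x x' y : ℂ} (hx : 0 < x.re)
    (hy : 0 < y.re) (hxx' : x.re ≤ x'.re) :
    ‖extBeta p q x' y‖ ≤ ∫ t in (0 : ℝ)..1, ‖(t : ℂ) ^ (x - 1) * (1 - (t : ℂ)) ^ (y - 1)‖ := by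
  refine intervalIntegral.norm_integral_le_of_norm_le zero_le_one
    (ae_of_all _ fun t ⟨ht0, ht1⟩ => ?_) (betaIntegral_convergent hx hy).norm
  have hpow : ‖(t : ℂ) ^ (x' - 1)‖ ≤ ‖(t : ℂ) ^ (x - 1)‖ := by
    rw [norm_cpow_eq_rpow_re_of_pos ht0, norm_cpow_eq_rpow_re_of_pos ht0]
    exact Real.rpow_le_rpow_of_exponent_ge ht0 ht1 (by simpa using hxx')
  have hexp : ‖exp (-(p / t) - q / (1 - t))‖ ≤ 1 := by
    have hreal : -((p : ℂ) / t) - q / (1 - t) = ((-(p / t) - q / (1 - t) : ℝ) : ℂ) := by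
      push_cast; ring
    rw [hreal, norm_exp_ofReal, Real.exp_le_one_iff]
    linarith [div_nonneg hp ht0.le, div_nonneg hq (sub_nonneg.2 ht1)]
  rw [norm_mul, norm_mul, norm_mul]
  calc ‖(t : ℂ) ^ (x' - 1)‖ * ‖(1 - (t : ℂ)) ^ (y - 1)‖ * ‖exp (-(p / t) - q / (1 - t))‖
      ≤ ‖(t : ℂ) ^ (x - 1)‖ * ‖(1 - (t : ℂ)) ^ (y - 1)‖ * 1 := by gcongr
    _ = ‖(t : ℂ) ^ (x - 1)‖ * ‖(1 - (t : ℂ)) ^ (y - 1)‖ := mul_one _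

lemma norm_poch_le (c : ℂ) (n : ℕ) : ‖poch c n‖ ≤ (‖c‖ + 1) ^ n * n.factorial := by
  calc ‖poch c n‖ = ∏ i ∈ Finset.range n, ‖c + i‖ := by rw [poch, norm_prod]
    _ ≤ ∏ i ∈ Finset.range n, ((‖c‖ + 1) * (i + 1)) := by
        gcongr with i
        calc ‖c + i‖ ≤ ‖c‖ + i := by simpa using norm_add_le c i
          _ ≤ (‖c‖ + 1) * (i + 1) := by nlinarith [norm_nonneg c, (i.cast_nonneg : (0 : ℝ) ≤ i)]
    _ = (‖c‖ + 1) ^ n * n.factorial := by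
        rw [Finset.prod_mul_distrib, Finset.prod_const, Finset.card_range,
          ← Finset.prod_range_add_one_eq_factorial]
        push_cast
        rfl

noncomputable def extMLCoeff (α β γ c p q : ℂ) (n : ℕ) : ℂ :=
  extBeta p q (γ + n) (c - γ) / cBeta γ (c - γ) * poch c n * (Gamma (α * n + β))⁻¹ /
    n.factorial

lemma extML_eq_tsum (α β γ c p q z : ℂ) :
    extML α β γ c p q z = ∑' n, extMLCoeff α β γ c p q n * z ^ n :=
  tsum_congr fun n => by rw [extMLCoeff]; ring

lemma extMLCoeff_eq_mul_extMLCoeff_add_one (α β γ c p q : ℂ) (n : ℕ) :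
    extMLCoeff α β γ c p q n = (α * n + β) * extMLCoeff α (β + 1) γ c p q n := by
  rw [extMLCoeff, extMLCoeff, one_div_Gamma_eq_self_mul_one_div_Gamma_add_one, add_assoc]
  ring

lemma summable_norm_extMLCoeff_mul_pow {p q : ℝ} (hp : 0 ≤ p) (hq : 0 ≤ q) {c α γ : ℂ}
    (hcγ : γ.re < c.re) (hγ : 0 < γ.re) (hα : 0 < α.re) (β : ℂ) (r : ℝ) (hr : 0 ≤ r) :
    Summable fun n => ‖extMLCoeff α β γ c p q n‖ * r ^ n := by
  set B := ∫ t in (0 : ℝ)..1, ‖(t : ℂ) ^ (γ - 1) * (1 - (t : ℂ)) ^ (c - γ - 1)‖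
  have hB : 0 ≤ B := intervalIntegral.integral_nonneg zero_le_one fun _ _ => norm_nonneg _
  refine .of_nonneg_of_le (fun n => by positivity) (fun n => ?_)
    ((summable_pow_mul_norm_inv_Gamma_mul_add hα β ((‖c‖ + 1) * r)).mul_left
      (B / ‖cBeta γ (c - γ)‖))
  have hbeta : ‖extBeta p q (γ + n) (c - γ)‖ ≤ B :=
    norm_extBeta_le hp hq hγ (by simpa using hcγ) (by simp)
  simp only [extMLCoeff, norm_div, norm_mul, norm_natCast]
  calc ‖extBeta p q (γ + n) (c - γ)‖ / ‖cBeta γ (c - γ)‖ * ‖poch c n‖ *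
        ‖(Gamma (α * n + β))⁻¹‖ / n.factorial * r ^ n
      ≤ B / ‖cBeta γ (c - γ)‖ * ((‖c‖ + 1) ^ n * n.factorial) *
        ‖(Gamma (α * n + β))⁻¹‖ / n.factorial * r ^ n := by
        gcongr
        exact norm_poch_le c n
    _ = B / ‖cBeta γ (c - γ)‖ * (((‖c‖ + 1) * r) ^ n * ‖(Gamma (α * n + β))⁻¹‖) := by
        rw [mul_pow]
        field_simp

theorem extML_recurrence_general (p q : ℝ) (hp : 0 ≤ p) (hq : 0 ≤ q)
    (c α β γ : ℂ) (hcγ : γ.re < c.re) (hγ : 0 < γ.re)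
    (hα : 0 < α.re) (z : ℂ) :
    extML α β γ c p q z =
      β * extML α (β + 1) γ c p q z +
        α * z * deriv (fun w : ℂ => extML α (β + 1) γ c p q w) z := by
  set a := extMLCoeff α (β + 1) γ c p q
  have ha := summable_norm_extMLCoeff_mul_pow hp hq hcγ hγ hα (β + 1)
  have hval : HasSum (fun n => a n * z ^ n) (extML α (β + 1) γ c p q z) := by
    rw [extML_eq_tsum]
    exact (Summable.of_norm (by simpa [norm_mul, norm_pow] using ha ‖z‖ (norm_nonneg z))).hasSum
  have hderiv : HasSum (fun n => a n * (n * z ^ (n - 1)))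
      (deriv (fun w => extML α (β + 1) γ c p q w) z) := by
    simpa only [extML_eq_tsum] using hasSum_deriv_tsum_mul_pow ha z
  have hterm (n : ℕ) : extMLCoeff α β γ c p q n * z ^ n =
      β * (a n * z ^ n) + α * z * (a n * (n * z ^ (n - 1))) := by
    rw [extMLCoeff_eq_mul_extMLCoeff_add_one]
    rcases n with _ | n
    · simp [a]
    · rw [Nat.add_sub_cancel, pow_succ]
      push_cast
      ring
  rw [extML_eq_tsum, tsum_congr hterm]
  exact ((hval.mul_left β).add (hderiv.mul_left (α * z))).tsum_eq

/-- functional-differential recurrence for the extended (p,q)-Mittag-Leffler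
function. -/
theorem extML_recurrence (p q : ℝ) (hp : 0 ≤ p) (hq : 0 ≤ q)
    (c α β γ : ℂ) (hcγ : γ.re < c.re) (hγ : 0 < γ.re)
    (hα : 0 < α.re) (hβ : 0 < β.re) (z : ℂ) :
    extML α β γ c p q z =
      β * extML α (β + 1) γ c p q z +
        α * z * deriv (fun w : ℂ => extML α (β + 1) γ c p q w) z :=
  extML_recurrence_general p q hp hq c α β γ hcγ hγ hα z
end

section
/- Let p, q ≥ 0, let α, β, δ, λ be complex numbers with Re(λ) > Re(δ) > 0, Re(α) > 0 and Re(β) > 0, and let x > 0 be real. Then the extended Riemann–Liouville fractional derivative of order δ−λ (with two-parameter exponential regularizer) of the function z^{δ−1} E^{λ}_{α,β}(z) satisfies: (1/Γ(λ−δ)) ∫₀^x τ^{δ−1} E^{λ}_{α,β}(τ) (x−τ)^{λ−δ−1} exp(−p x/τ − q x/(x−τ)) dτ = x^{λ−1} [B(δ, λ−δ)/Γ(λ−δ)] E^{δ,λ}_{α,β}(x; p, q). -/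
open MeasureTheory Complex

/-!
Expand `E^λ_{α,β}(τ)` into its power series and integrate termwise: the substitution `τ = x t`
turns the `n`-th term into `x^(λ+n-1) B(δ+n, λ-δ; p, q)`, which is exactly the `n`-th term of
`x^(λ-1) B(δ, λ-δ) E^{δ,λ}_{α,β}(x; p, q)`. Termwise integration is dominated convergence: the
regularizing exponential has modulus at most `1` for `p, q ≥ 0`, the beta kernel
`τ^(δ-1) (x-τ)^(λ-δ-1)` is integrable, and `∑ |(λ)ₙ| xⁿ / (|Γ(αn+β)| n!)` converges. For the
latter, Euler's limit formula gives `|Γ(z)| ≥ Γ(Re z) exp(-(Im z)² (1/(Re z)² + 1/Re z))`, so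
`|Γ(αn+β)| ≥ Γ(n Re α + Re β) e^{-K(n+1)}`, and the resulting real series passes the ratio test
by log-convexity of `Γ`.
-/

open Filter Set Topology Nat

lemma sum_range_one_div_add_sq_le {X : ℝ} (hX : 0 < X) (N : ℕ) :
    ∑ j ∈ Finset.range N, 1 / (X + j) ^ 2 ≤ 1 / X ^ 2 + 1 / X := by
  have telescope (N : ℕ) :
      ∑ j ∈ Finset.range N, 1 / (X + (j + 1)) ^ 2 ≤ 1 / X - 1 / (X + N) := by
    induction N with
    | zero => simp
    | succ N ih =>
      have step : 1 / (X + (N + 1)) ^ 2 ≤ 1 / (X + N) - 1 / (X + (N + 1)) := by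
        rw [div_sub_div _ _ (by positivity) (by positivity),
          div_le_div_iff₀ (by positivity) (by positivity)]
        nlinarith
      rw [Finset.sum_range_succ]
      push_cast
      linarith
  cases N with
  | zero => simp only [Finset.range_zero, Finset.sum_empty]; positivity
  | succ N =>
    have htail := telescope N
    have hlast : 0 ≤ 1 / (X + N) := by positivity
    rw [Finset.sum_range_succ']
    push_cast
    simp only [add_zero]
    linarith

namespace Complex

lemma norm_le_re_add_sq_im_div_re {z : ℂ} (hz : 0 < z.re) : ‖z‖ ≤ z.re + z.im ^ 2 / z.re := by
  refine le_of_sq_le_sq ?_ (by positivity)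
  have hnorm := sq_norm_sub_sq_re z
  have hdiv : z.im ^ 2 / z.re * z.re = z.im ^ 2 := div_mul_cancel₀ _ hz.ne'
  nlinarith [sq_nonneg (z.im ^ 2 / z.re)]

lemma norm_le_re_mul_exp {z : ℂ} (hz : 0 < z.re) :
    ‖z‖ ≤ z.re * Real.exp (z.im ^ 2 / z.re ^ 2) := by
  calc ‖z‖ ≤ z.re + z.im ^ 2 / z.re := norm_le_re_add_sq_im_div_re hz
    _ = z.re * (z.im ^ 2 / z.re ^ 2 + 1) := by field_simp; ring
    _ ≤ z.re * Real.exp (z.im ^ 2 / z.re ^ 2) := by gcongr; exact Real.add_one_le_exp _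

theorem Gamma_re_mul_exp_le_norm_Gamma {z : ℂ} (hz : 0 < z.re) :
    Real.Gamma z.re * Real.exp (-(z.im ^ 2 * (1 / z.re ^ 2 + 1 / z.re))) ≤ ‖Gamma z‖ := by
  set E := z.im ^ 2 * (1 / z.re ^ 2 + 1 / z.re)
  have hprod (n : ℕ) : ∏ j ∈ Finset.range n, ‖z + j‖ ≤
      (∏ j ∈ Finset.range n, (z.re + j)) * Real.exp E := by
    calc ∏ j ∈ Finset.range n, ‖z + j‖
        ≤ ∏ j ∈ Finset.range n, (z.re + j) * Real.exp (z.im ^ 2 / (z.re + j) ^ 2) := by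
          refine Finset.prod_le_prod (fun _ _ ↦ norm_nonneg _) fun j _ ↦ ?_
          simpa using norm_le_re_mul_exp (z := z + j) (by simp; positivity)
      _ = (∏ j ∈ Finset.range n, (z.re + j)) *
            Real.exp (z.im ^ 2 * ∑ j ∈ Finset.range n, 1 / (z.re + j) ^ 2) := by
          simp only [Finset.prod_mul_distrib, Real.exp_sum, Finset.mul_sum, mul_one_div]
      _ ≤ (∏ j ∈ Finset.range n, (z.re + j)) * Real.exp E := by
          gcongr
          exact mul_le_mul_of_nonneg_left (sum_range_one_div_add_sq_le hz n) (sq_nonneg _)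
  have hseq : ∀ n ≥ 1, Real.GammaSeq z.re n * Real.exp (-E) ≤ ‖GammaSeq z n‖ := by
    intro n hn
    have hpos : 0 < ∏ j ∈ Finset.range (n + 1), ‖z + j‖ :=
      Finset.prod_pos fun j _ ↦ norm_pos_iff.mpr <| ne_of_apply_ne re (by simp; positivity)
    rw [GammaSeq, Real.GammaSeq, norm_div, norm_mul, norm_natCast_cpow_of_pos hn, norm_prod,
      Real.exp_neg, ← div_eq_mul_inv, div_div, RCLike.norm_natCast]
    exact div_le_div_of_nonneg_left (by positivity) hpos (hprod _)
  exact le_of_tendsto_of_tendsto ((Real.GammaSeq_tendsto_Gamma _).mul_const _)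
    (GammaSeq_tendsto_Gamma z).norm (eventually_atTop.mpr ⟨1, hseq⟩)

end Complex

lemma sq_mul_one_div_sq_add_one_div_le {X Y m M s : ℝ} (hm : 0 < m) (hs : 1 ≤ s)
    (hX : m * s ≤ X) (hY : |Y| ≤ M * s) :
    Y ^ 2 * (1 / X ^ 2 + 1 / X) ≤ M ^ 2 * (1 / m ^ 2 + 1 / m) * s := by
  have hms : 0 < m * s := by positivity
  have hX0 : 0 < X := hms.trans_le hX
  calc Y ^ 2 * (1 / X ^ 2 + 1 / X)
      ≤ (M * s) ^ 2 * (1 / (m * s) ^ 2 + 1 / (m * s)) :=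
        mul_le_mul (sq_le_sq' (abs_le.mp hY).1 (abs_le.mp hY).2) (by gcongr) (by positivity)
          (by positivity)
    _ = M ^ 2 * (1 / m ^ 2 + s / m) := by field_simp
    _ ≤ M ^ 2 * (1 / m ^ 2 + 1 / m) * s := by
        have h1 : 1 / m ^ 2 ≤ 1 / m ^ 2 * s := le_mul_of_one_le_right (by positivity) hs
        have h2 : s / m = 1 / m * s := by ring
        nlinarith [sq_nonneg M]

lemma exists_Gamma_re_mul_exp_le_norm_Gamma {α β : ℂ} (hα : 0 < α.re) (hβ : 0 < β.re) :
    ∃ K : ℝ, ∀ n : ℕ, Real.Gamma (α.re * n + β.re) * Real.exp (-(K * (n + 1))) ≤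
      ‖Gamma (α * n + β)‖ := by
  set m := min α.re β.re
  set M := |α.im| + |β.im|
  refine ⟨M ^ 2 * (1 / m ^ 2 + 1 / m), fun n ↦ ?_⟩
  have hre : (α * n + β).re = α.re * n + β.re := by simp
  have him : (α * n + β).im = α.im * n + β.im := by simp
  have hbound := Gamma_re_mul_exp_le_norm_Gamma (z := α * n + β) (by rw [hre]; positivity)
  rw [hre, him] at hbound
  refine le_trans ?_ hbound
  gcongr _ * Real.exp (-?_)
  have hn : (0 : ℝ) ≤ n := n.cast_nonneg
  refine sq_mul_one_div_sq_add_one_div_le (lt_min hα hβ) (le_add_of_nonneg_left hn) ?_ ?_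
  · nlinarith [min_le_left α.re β.re, min_le_right α.re β.re]
  · calc |α.im * n + β.im| ≤ |α.im| * n + |β.im| := by
          simpa [abs_mul] using abs_add_le (α.im * n) β.im
      _ ≤ M * (n + 1) := by nlinarith [abs_nonneg α.im, abs_nonneg β.im]

lemma Real.Gamma_mul_rpow_le_Gamma_add {x r : ℝ} (hx : 1 < x) (hr : 0 < r) :
    Real.Gamma x * (x - 1) ^ r ≤ Real.Gamma (x + r) := by
  have hx1 : 0 < x - 1 := by linarith
  have hslope := Real.convexOn_log_Gamma.slope_mono_adjacent (mem_Ioi.mpr hx1)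
    (mem_Ioi.mpr (by linarith : 0 < x + r)) (by linarith : x - 1 < x) (by linarith : x < x + r)
  have hrec : Real.Gamma x = (x - 1) * Real.Gamma (x - 1) := by
    simpa using Real.Gamma_add_one hx1.ne'
  simp only [Function.comp, hrec, sub_sub_cancel, add_sub_cancel_left, div_one,
    Real.log_mul hx1.ne' (Real.Gamma_pos_of_pos hx1).ne', add_sub_cancel_right,
    le_div_iff₀ hr] at hslope
  rw [← Real.log_le_log_iff (by positivity) (Real.Gamma_pos_of_pos (by linarith)),
    Real.log_mul (Real.Gamma_pos_of_pos (by linarith)).ne' (Real.rpow_pos_of_pos hx1 r).ne',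
    Real.log_rpow hx1, hrec, Real.log_mul hx1.ne' (Real.Gamma_pos_of_pos hx1).ne']
  linarith

lemma norm_poch_succ_le (c : ℂ) (n : ℕ) :
    ‖poch c (n + 1)‖ ≤ ‖poch c n‖ * ((‖c‖ + 1) * (n + 1)) := by
  rw [poch, Finset.prod_range_succ, ← poch, norm_mul]
  gcongr
  calc ‖c + n‖ ≤ ‖c‖ + n := by simpa using norm_add_le c n
    _ ≤ (‖c‖ + 1) * (n + 1) := by nlinarith [norm_nonneg c, (n.cast_nonneg : (0 : ℝ) ≤ n)]

lemma summable_norm_poch_mul_pow_div_Gamma (c : ℂ) {a b r : ℝ} (ha : 0 < a) (hb : 0 < b)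
    (hr : 0 ≤ r) :
    Summable fun n : ℕ ↦ ‖poch c n‖ * r ^ n / (Real.Gamma (a * n + b) * n !) := by
  set f : ℕ → ℝ := fun n ↦ ‖poch c n‖ * r ^ n / (Real.Gamma (a * n + b) * n !)
  have hf_nonneg (n : ℕ) : 0 ≤ f n :=
    div_nonneg (by positivity) (mul_nonneg (Real.Gamma_pos_of_pos (by positivity)).le
      (by positivity))
  have hlin : Tendsto (fun n : ℕ ↦ a * n + b - 1) atTop atTop :=
    (tendsto_atTop_add_const_right _ (b - 1)
      (tendsto_natCast_atTop_atTop.const_mul_atTop ha)).congr fun n ↦ by ring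
  refine summable_of_ratio_norm_eventually_le (r := 1 / 2) (by norm_num) ?_
  filter_upwards [((tendsto_rpow_atTop ha).comp hlin).eventually_ge_atTop (2 * (‖c‖ + 1) * r),
    hlin.eventually_gt_atTop 0] with n hbig hpos
  obtain ⟨X, hX⟩ : ∃ X, a * n + b = X := ⟨_, rfl⟩
  rw [Function.comp_apply, hX] at hbig
  rw [hX] at hpos
  have hΓX : 0 < Real.Gamma X := Real.Gamma_pos_of_pos (by linarith)
  have hpow : 0 < (X - 1) ^ a := Real.rpow_pos_of_pos hpos a
  have hfn : f n = ‖poch c n‖ * r ^ n / (Real.Gamma X * n !) := by simp only [f, hX]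
  have hfsucc : f (n + 1) = ‖poch c (n + 1)‖ * (r ^ n * r) /
      (Real.Gamma (X + a) * (n ! * (n + 1))) := by
    simp only [f, ← hX, pow_succ, factorial_succ, cast_mul, cast_succ]
    ring_nf
  rw [Real.norm_of_nonneg (hf_nonneg _), Real.norm_of_nonneg (hf_nonneg _), hfsucc, hfn]
  calc ‖poch c (n + 1)‖ * (r ^ n * r) / (Real.Gamma (X + a) * (n ! * (n + 1)))
      ≤ ‖poch c n‖ * ((‖c‖ + 1) * (n + 1)) * (r ^ n * r) /
          (Real.Gamma X * (X - 1) ^ a * (n ! * (n + 1))) := by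
        gcongr
        · exact norm_poch_succ_le c n
        · exact Real.Gamma_mul_rpow_le_Gamma_add (by linarith) ha
    _ = ‖poch c n‖ * r ^ n / (Real.Gamma X * n !) * ((‖c‖ + 1) * r / (X - 1) ^ a) := by
        field_simp
    _ ≤ 1 / 2 * (‖poch c n‖ * r ^ n / (Real.Gamma X * n !)) := by
        rw [mul_comm (1 / 2)]
        exact mul_le_mul_of_nonneg_left (by rw [div_le_iff₀ hpow]; linarith)
          (hfn ▸ hf_nonneg n)

lemma summable_norm_poch_mul_pow_div_norm_Gamma (c : ℂ) {α β : ℂ} (hα : 0 < α.re)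
    (hβ : 0 < β.re) {r : ℝ} (hr : 0 ≤ r) :
    Summable fun n : ℕ ↦ ‖poch c n‖ * r ^ n / (‖Gamma (α * n + β)‖ * n !) := by
  obtain ⟨K, hK⟩ := exists_Gamma_re_mul_exp_le_norm_Gamma hα hβ
  refine Summable.of_nonneg_of_le (fun n ↦ by positivity) (fun n ↦ ?_)
    ((summable_norm_poch_mul_pow_div_Gamma c hα hβ
      (mul_nonneg hr (Real.exp_pos K).le)).mul_left (Real.exp K))
  have hΓ : 0 < Real.Gamma (α.re * n + β.re) := Real.Gamma_pos_of_pos (by positivity)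
  calc ‖poch c n‖ * r ^ n / (‖Gamma (α * n + β)‖ * n !)
      ≤ ‖poch c n‖ * r ^ n /
          (Real.Gamma (α.re * n + β.re) * Real.exp (-(K * (n + 1))) * n !) := by
        gcongr
        exact hK n
    _ = Real.exp K *
          (‖poch c n‖ * (r * Real.exp K) ^ n / (Real.Gamma (α.re * n + β.re) * n !)) := by
        rw [Real.exp_neg, mul_pow, ← Real.exp_nat_mul, show K * (n + 1) = K + n * K by ring,
          Real.exp_add]
        field_simp

lemma norm_poch_div_mul_pow_le (c α β : ℂ) (n : ℕ) {z : ℂ} {r : ℝ} (hz : ‖z‖ ≤ r) :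
    ‖poch c n / (Gamma (α * n + β) * n !) * z ^ n‖ ≤
      ‖poch c n‖ * r ^ n / (‖Gamma (α * n + β)‖ * n !) := by
  rw [norm_mul, norm_div, norm_mul, norm_pow, RCLike.norm_natCast, div_mul_eq_mul_div]
  gcongr

lemma hasSum_prabhakarML {α β : ℂ} (hα : 0 < α.re) (hβ : 0 < β.re) (c z : ℂ) :
    HasSum (fun n : ℕ ↦ poch c n / (Gamma (α * n + β) * n !) * z ^ n)
      (prabhakarML α β c z) := by
  have hsum : Summable fun n : ℕ ↦ poch c n / (Gamma (α * n + β) * n !) * z ^ n :=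
    (summable_norm_poch_mul_pow_div_norm_Gamma c hα hβ (norm_nonneg z)).of_norm_bounded
      fun n ↦ norm_poch_div_mul_pow_le c α β n le_rfl
  convert hsum.hasSum using 1
  exact tsum_congr fun n ↦ by ring

lemma hasSum_integral_prabhakarML_mul {α β : ℂ} (hα : 0 < α.re) (hβ : 0 < β.re) (c : ℂ)
    {x : ℝ} (hx : 0 ≤ x) {W : ℝ → ℂ} (hW : IntervalIntegrable W volume 0 x) :
    HasSum (fun n : ℕ ↦
        poch c n / (Gamma (α * n + β) * n !) * ∫ τ in (0 : ℝ)..x, (τ : ℂ) ^ n * W τ)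
      (∫ τ in (0 : ℝ)..x, prabhakarML α β c τ * W τ) := by
  set a : ℕ → ℝ := fun n ↦ ‖poch c n‖ * x ^ n / (‖Gamma (α * n + β)‖ * n !)
  have ha : Summable a := summable_norm_poch_mul_pow_div_norm_Gamma c hα hβ hx
  have hnorm {τ : ℝ} (hτ : τ ∈ uIoc 0 x) : ‖(τ : ℂ)‖ ≤ x := by
    rw [uIoc_of_le hx] at hτ
    rw [norm_real, Real.norm_of_nonneg hτ.1.le]
    exact hτ.2
  simp_rw [← intervalIntegral.integral_const_mul, ← mul_assoc]
  refine intervalIntegral.hasSum_integral_of_dominated_convergence (fun n τ ↦ a n * ‖W τ‖)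
    (fun n ↦ ?_) (fun n ↦ ae_of_all _ fun τ hτ ↦ ?_) (ae_of_all _ fun τ _ ↦ ha.mul_right _) ?_
    (ae_of_all _ fun τ _ ↦ (hasSum_prabhakarML hα hβ c τ).mul_right (W τ))
  · exact (((continuous_ofReal.pow n).aestronglyMeasurable).const_mul _).mul
      hW.def'.aestronglyMeasurable
  · rw [norm_mul]
    exact mul_le_mul_of_nonneg_right (norm_poch_div_mul_pow_le c α β n (hnorm hτ))
      (norm_nonneg _)
  · simp_rw [tsum_mul_right]
    exact hW.norm.const_mul _

lemma ofReal_mul_cpow_mul_sub_cpow {x t : ℝ} (hx : 0 ≤ x) (ht : t ∈ Icc (0 : ℝ) 1) (s w : ℂ) :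
    ((x * t : ℝ) : ℂ) ^ s * ((x : ℂ) - (x * t : ℝ)) ^ w =
      (x : ℂ) ^ s * (x : ℂ) ^ w * ((t : ℂ) ^ s * (1 - (t : ℂ)) ^ w) := by
  have hsub : (x : ℂ) - (x * t : ℝ) = ((x : ℝ) : ℂ) * ((1 - t : ℝ) : ℂ) := by push_cast; ring
  rw [hsub, ofReal_mul, mul_cpow_ofReal_nonneg hx ht.1,
    mul_cpow_ofReal_nonneg hx (by linarith [ht.2])]
  push_cast
  ring

lemma intervalIntegrable_cpow_mul_sub_cpow {u v : ℂ} (hu : 0 < u.re) (hv : 0 < v.re) {x : ℝ}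
    (hx : 0 < x) :
    IntervalIntegrable (fun τ : ℝ ↦ (τ : ℂ) ^ (u - 1) * ((x : ℂ) - τ) ^ (v - 1)) volume 0 x := by
  have hscaled := ((betaIntegral_convergent hu hv).comp_mul_left (c := x⁻¹)).const_mul
    ((x : ℂ) ^ (u - 1) * (x : ℂ) ^ (v - 1))
  rw [zero_div, one_div, inv_inv] at hscaled
  refine hscaled.congr fun τ hτ ↦ ?_
  rw [uIoc_of_le hx.le] at hτ
  have ht : x⁻¹ * τ ∈ Icc (0 : ℝ) 1 :=
    ⟨by positivity [hτ.1.le], by rw [inv_mul_le_iff₀ hx, mul_one]; exact hτ.2⟩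
  rw [← ofReal_mul_cpow_mul_sub_cpow hx.le ht, mul_inv_cancel_left₀ hx.ne']

lemma norm_exp_neg_div_sub_div_le_one_s8 {p q x τ : ℝ} (hp : 0 ≤ p) (hq : 0 ≤ q)
    (hτ : τ ∈ Icc 0 x) :
    ‖exp (-((p : ℂ) * x / τ) - (q : ℂ) * x / ((x : ℂ) - τ))‖ ≤ 1 := by
  have hx : 0 ≤ x := hτ.1.trans hτ.2
  have hxτ : 0 ≤ x - τ := sub_nonneg.mpr hτ.2
  rw [norm_exp, Real.exp_le_one_iff]
  norm_cast
  have hpτ := div_nonneg (mul_nonneg hp hx) hτ.1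
  have hqτ := div_nonneg (mul_nonneg hq hx) hxτ
  linarith

lemma intervalIntegrable_cpow_mul_sub_cpow_mul_exp {p q : ℝ} (hp : 0 ≤ p) (hq : 0 ≤ q)
    {u v : ℂ} (hu : 0 < u.re) (hv : 0 < v.re) {x : ℝ} (hx : 0 < x) :
    IntervalIntegrable (fun τ : ℝ ↦ (τ : ℂ) ^ (u - 1) * ((x : ℂ) - τ) ^ (v - 1) *
      exp (-((p : ℂ) * x / τ) - (q : ℂ) * x / ((x : ℂ) - τ))) volume 0 x := by
  refine intervalIntegrable_iff.mpr <|
    (intervalIntegrable_cpow_mul_sub_cpow hu hv hx).def'.mul_bdd (c := 1)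
      (by fun_prop : Measurable _).aestronglyMeasurable ?_
  rw [uIoc_of_le hx.le]
  exact (ae_restrict_iff' measurableSet_Ioc).mpr <| ae_of_all _ fun τ hτ ↦
    norm_exp_neg_div_sub_div_le_one_s8 hp hq (Ioc_subset_Icc_self hτ)

lemma integral_cpow_mul_sub_cpow_mul_exp (p q u v : ℂ) {x : ℝ} (hx : 0 < x) :
    ∫ τ in (0 : ℝ)..x, (τ : ℂ) ^ (u - 1) * ((x : ℂ) - τ) ^ (v - 1) *
        exp (-(p * x / τ) - q * x / ((x : ℂ) - τ)) =
      (x : ℂ) ^ (u + v - 1) * extBeta p q u v := by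
  have hxC : (x : ℂ) ≠ 0 := ofReal_ne_zero.mpr hx.ne'
  rw [← mul_one x, ← mul_zero x, ← intervalIntegral.smul_integral_comp_mul_left, mul_one x,
    intervalIntegral.integral_congr (g := fun t : ℝ ↦ (x : ℂ) ^ (u - 1) * (x : ℂ) ^ (v - 1) *
      ((t : ℂ) ^ (u - 1) * (1 - (t : ℂ)) ^ (v - 1) * exp (-(p / t) - q / (1 - (t : ℂ)))))]
  · rw [intervalIntegral.integral_const_mul, extBeta, real_smul,
      show u + v - 1 = 1 + ((u - 1) + (v - 1)) by ring, cpow_add _ _ hxC, cpow_add _ _ hxC,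
      cpow_one]
    ring
  · intro t ht
    rw [uIcc_of_le zero_le_one] at ht
    have hsub : (x : ℂ) - (x * t : ℝ) = x * (1 - t) := by push_cast; ring
    beta_reduce
    rw [ofReal_mul_cpow_mul_sub_cpow hx.le ht, hsub, ofReal_mul, mul_comm p, mul_comm q,
      mul_div_mul_left _ _ hxC, mul_div_mul_left _ _ hxC]
    ring

lemma integral_pow_mul_cpow_mul_sub_cpow_mul_exp (p q u v : ℂ) (n : ℕ) {x : ℝ} (hx : 0 < x) :
    ∫ τ in (0 : ℝ)..x, (τ : ℂ) ^ n * ((τ : ℂ) ^ (u - 1) * ((x : ℂ) - τ) ^ (v - 1) *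
        exp (-(p * x / τ) - q * x / ((x : ℂ) - τ))) =
      (x : ℂ) ^ (u + n + v - 1) * extBeta p q (u + n) v := by
  rw [← integral_cpow_mul_sub_cpow_mul_exp p q (u + n) v hx]
  refine intervalIntegral.integral_congr_ae (ae_of_all _ fun τ hτ ↦ ?_)
  rw [uIoc_of_le hx.le] at hτ
  rw [show u + n - 1 = (u - 1) + n by ring,
    cpow_add _ _ (ofReal_ne_zero.mpr hτ.1.ne'), cpow_natCast]
  ring

lemma cBeta_ne_zero {x y : ℂ} (hx : 0 < x.re) (hy : 0 < y.re) : cBeta x y ≠ 0 :=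
  div_ne_zero (mul_ne_zero (Gamma_ne_zero_of_re_pos hx) (Gamma_ne_zero_of_re_pos hy))
    (Gamma_ne_zero_of_re_pos (by rw [add_re]; positivity))

/-- the extended Riemann–Liouville fractional derivative of order `δ - λ`
(with two-parameter exponential regularizer) of `z^(δ-1) E^λ_{α,β}(z)` gives the extended
(p,q)-Mittag-Leffler function. -/
theorem extML_fractional_derivative (p q : ℝ) (hp : 0 ≤ p) (hq : 0 ≤ q)
    (α β δ lam : ℂ) (hδlam : δ.re < lam.re) (hδ : 0 < δ.re)
    (hα : 0 < α.re) (hβ : 0 < β.re) (x : ℝ) (hx : 0 < x) :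
    (1 / Complex.Gamma (lam - δ)) *
        ∫ τ in (0:ℝ)..x, (τ : ℂ) ^ (δ - 1) * prabhakarML α β lam τ *
          ((x : ℂ) - τ) ^ (lam - δ - 1) *
          Complex.exp (-((p : ℂ) * x / τ) - (q : ℂ) * x / ((x : ℂ) - τ)) =
      (x : ℂ) ^ (lam - 1) * (cBeta δ (lam - δ) / Complex.Gamma (lam - δ)) *
        extML α β δ lam p q x := by
  have hlamδ : 0 < (lam - δ).re := by rw [sub_re]; linarith
  have hseries := hasSum_integral_prabhakarML_mul hα hβ lam hx.le
    (intervalIntegrable_cpow_mul_sub_cpow_mul_exp hp hq hδ hlamδ hx)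
  simp_rw [integral_pow_mul_cpow_mul_sub_cpow_mul_exp _ _ _ _ _ hx] at hseries
  have hB := cBeta_ne_zero hδ hlamδ
  have hxC : (x : ℂ) ≠ 0 := ofReal_ne_zero.mpr hx.ne'
  calc _ = 1 / Gamma (lam - δ) * ∫ τ in (0 : ℝ)..x, prabhakarML α β lam τ *
        ((τ : ℂ) ^ (δ - 1) * ((x : ℂ) - τ) ^ (lam - δ - 1) *
          exp (-((p : ℂ) * x / τ) - (q : ℂ) * x / ((x : ℂ) - τ))) := by
        congr 1
        exact intervalIntegral.integral_congr fun τ _ ↦ by ring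
    _ = _ := by
      rw [← hseries.tsum_eq, extML, ← tsum_mul_left, ← tsum_mul_left]
      refine tsum_congr fun n ↦ ?_
      rw [show δ + n + (lam - δ) - 1 = (lam - 1) + n by ring, cpow_add _ _ hxC, cpow_natCast]
      field_simp
end
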